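/- Let n ≥ 2, k ≥ 1, and let c : Fin n → ((Fin n → Fin k) → ℝ) be the payoff functions of an n-player finite game in which every player has strategy set Fin k. The game is potential if and only if for all players i < j, every strategy profile s : Fin n → Fin k, and all x, y : Fin k, writing d x y = c j (update (update s i x) j y) − c i (update (update s i x) j y), one has d x y = (1/k)·(∑ y' : Fin k, d x y') + (1/k)·(∑ x' : Fin k, d x' y) − (1/k²)·(∑ x' : Fin k, ∑ y' : Fin k, d x' y'). -/

import Mathlib

/-- An `n`-player finite game with payoff functions `c` (each player has strategy
set `Fin k`) is potential if it admits a potential function `p`. -/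
def IsPotentialGame {n k : ℕ} (c : Fin n → (Fin n → Fin k) → ℝ) : Prop :=
  ∃ p : (Fin n → Fin k) → ℝ,
    ∀ (i : Fin n) (s : Fin n → Fin k) (x y : Fin k),
      c i (Function.update s i x) - c i (Function.update s i y) =
        p (Function.update s i x) - p (Function.update s i y)

/-- The relative payoff `d x y = c j (s[i:=x][j:=y]) - c i (s[i:=x][j:=y])`. -/
def relPay {n k : ℕ} (c : Fin n → (Fin n → Fin k) → ℝ) (i j : Fin n)
    (s : Fin n → Fin k) (x y : Fin k) : ℝ :=
  c j (Function.update (Function.update s i x) j y)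
    - c i (Function.update (Function.update s i x) j y)

/-!
A game is potential iff every four-cycle of unilateral deviations of two players `i ≠ j` has
zero total payoff change (Monderer–Shapley). For the pair `i, j` this says that the relative
payoff `d = c j - c i`, as a function of the two strategies, satisfies the rectangle rule
`d x y + d x' y' = d x y' + d x' y`, i.e. `d x y = u x + v y`; and a function on a finite
product is of that form exactly when it equals its row mean plus its column mean minus its
total mean. Conversely, under the four-cycle condition, summing the payoff changes along the
path that switches the players' strategies one at a time, in the order `0, 1, …, n - 1`, from a
fixed base profile to `s` gives a potential.
-/

open Function Finset

def IsAddSeparable {α β : Type*} (f : α → β → ℝ) : Prop :=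
  ∀ x x' y y', f x y + f x' y' = f x y' + f x' y

theorem isAddSeparable_iff_eq_mean {α β : Type*} [Fintype α] [Fintype β] [Nonempty α]
    [Nonempty β] (f : α → β → ℝ) :
    IsAddSeparable f ↔ ∀ x y, f x y =
      1 / (Fintype.card β : ℝ) * ∑ y', f x y' + 1 / (Fintype.card α : ℝ) * ∑ x', f x' y
        - 1 / ((Fintype.card α : ℝ) * Fintype.card β) * ∑ x', ∑ y', f x' y' := by
  have hα : (Fintype.card α : ℝ) ≠ 0 := by positivity
  have hβ : (Fintype.card β : ℝ) ≠ 0 := by positivity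
  constructor
  · intro hf x y
    have hsum : ∑ x', ∑ y', (f x y + f x' y') = ∑ x', ∑ y', (f x y' + f x' y) :=
      sum_congr rfl fun x' _ ↦ sum_congr rfl fun y' _ ↦ hf x x' y y'
    simp only [sum_add_distrib, sum_const, card_univ, nsmul_eq_mul, ← mul_sum] at hsum
    field_simp
    linear_combination hsum
  · intro hf x x' y y'
    linear_combination hf x y + hf x' y' - hf x y' - hf x' y

section Game

variable {n k : ℕ} {c : Fin n → (Fin n → Fin k) → ℝ}

theorem relPay_swap {i j : Fin n} (hij : i ≠ j) (s : Fin n → Fin k) (x y : Fin k) :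
    relPay c j i s y x = -relPay c i j s x y := by
  simp only [relPay, update_comm hij]
  ring

theorem IsAddSeparable.relPay_swap {i j : Fin n} (hij : i ≠ j) {s : Fin n → Fin k}
    (h : IsAddSeparable (relPay c i j s)) : IsAddSeparable (relPay c j i s) := by
  intro x x' y y'
  simp only [_root_.relPay_swap hij]
  linarith [h y y' x x']

theorem IsPotentialGame.isAddSeparable_relPay (hc : IsPotentialGame c) {i j : Fin n}
    (hij : i ≠ j) (s : Fin n → Fin k) : IsAddSeparable (relPay c i j s) := by
  obtain ⟨p, hp⟩ := hc
  intro x x' y y'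
  have hjx := hp j (update s i x) y y'
  have hjx' := hp j (update s i x') y y'
  have hiy := hp i (update s j y) x x'
  have hiy' := hp i (update s j y') x x'
  simp only [update_comm hij.symm] at hiy hiy'
  simp only [relPay]
  linarith

end Game

section PrefixProfile

variable {n : ℕ} {α : Type*}

def prefixProfile (b : α) (s : Fin n → α) (m : ℕ) : Fin n → α :=
  fun j ↦ if (j : ℕ) < m then s j else b

variable (b : α) (s : Fin n → α)

theorem prefixProfile_apply_self (m : Fin n) : prefixProfile b s m m = b := by
  simp [prefixProfile]

theorem prefixProfile_of_le {m : ℕ} (hm : n ≤ m) : prefixProfile b s m = s := by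
  funext j
  simp [prefixProfile, j.isLt.trans_le hm]

theorem prefixProfile_succ (m : Fin n) :
    prefixProfile b s (m + 1) = update (prefixProfile b s m) m (s m) := by
  funext j
  rcases eq_or_ne j m with rfl | hj
  · simp [prefixProfile]
  · have : (j : ℕ) ≠ m := Fin.val_ne_of_ne hj
    simp only [prefixProfile, update_of_ne hj, Nat.lt_succ_iff_lt_or_eq, this, or_false]

variable {i : Fin n} (x : α)

theorem prefixProfile_update_of_le {m : ℕ} (hm : m ≤ i) :
    prefixProfile b (update s i x) m = prefixProfile b s m := by
  funext j
  rcases eq_or_ne j i with rfl | hj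
  · simp [prefixProfile, not_lt.mpr hm]
  · simp [prefixProfile, update_of_ne hj]

theorem prefixProfile_update_of_lt {m : ℕ} (hm : (i : ℕ) < m) :
    prefixProfile b (update s i x) m = update (prefixProfile b s m) i x := by
  funext j
  rcases eq_or_ne j i with rfl | hj
  · simp [prefixProfile, hm]
  · simp [prefixProfile, update_of_ne hj]

end PrefixProfile

section Potential

variable {n k : ℕ} {c : Fin n → (Fin n → Fin k) → ℝ}

def deviationGain {α : Type*} (f : (Fin n → α) → ℝ) (i : Fin n) (x y : α) (t : Fin n → α) : ℝ :=
  f (update t i x) - f (update t i y)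

def prefixPotential (c : Fin n → (Fin n → Fin k) → ℝ) (b : Fin k) (s : Fin n → Fin k) : ℝ :=
  ∑ m : Fin n, (c m (prefixProfile b s (m + 1)) - c m (prefixProfile b s m))

theorem deviationGain_prefixPotential_step
    (hc : ∀ i j : Fin n, i ≠ j → ∀ s, IsAddSeparable (relPay c i j s)) (b : Fin k)
    (i m : Fin n) (s : Fin n → Fin k) (x y : Fin k) :
    deviationGain (fun t ↦ c m (prefixProfile b t (m + 1)) - c m (prefixProfile b t m)) i x y s =
      (if (i : ℕ) < m + 1 then deviationGain (c i) i x y (prefixProfile b s (m + 1)) else 0)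
        - (if (i : ℕ) < m then deviationGain (c i) i x y (prefixProfile b s m) else 0) := by
  rcases lt_trichotomy (m : ℕ) i with hmi | hmi | hmi
  · simp only [deviationGain, prefixProfile_update_of_le b s _ hmi,
      prefixProfile_update_of_le b s _ hmi.le, if_neg (by omega : ¬ (i : ℕ) < m + 1),
      if_neg (by omega : ¬ (i : ℕ) < m)]
    ring
  · obtain rfl : m = i := Fin.ext hmi
    simp only [deviationGain, prefixProfile_update_of_lt b s _ (Nat.lt_succ_self m),
      prefixProfile_update_of_le b s _ le_rfl, prefixProfile_succ, update_idem,
      if_pos (Nat.lt_succ_self m), lt_irrefl, if_false]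
    ring
  · have him : i ≠ m := Fin.ne_of_lt hmi
    set t := prefixProfile b s m
    -- the four-cycle in which `i` switches between `x`, `y` and `m` between `s m`, `b = t m`
    have hsep := hc i m him t x y (s m) b
    have hbase : ∀ z, update (update t i z) m b = update t i z := fun z ↦ by
      rw [update_eq_self_iff, update_of_ne him.symm]; exact (prefixProfile_apply_self b s m).symm
    simp only [relPay, hbase, update_comm him] at hsep
    simp only [deviationGain, prefixProfile_update_of_lt b s _ hmi,
      prefixProfile_update_of_lt b s _ (hmi.trans (Nat.lt_succ_self m)), prefixProfile_succ,
      if_pos hmi, if_pos (hmi.trans (Nat.lt_succ_self m))]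
    linarith

theorem deviationGain_prefixPotential
    (hc : ∀ i j : Fin n, i ≠ j → ∀ s, IsAddSeparable (relPay c i j s)) (b : Fin k)
    (i : Fin n) (s : Fin n → Fin k) (x y : Fin k) :
    deviationGain (prefixPotential c b) i x y s = deviationGain (c i) i x y s := by
  set G : ℕ → ℝ := fun m ↦
    if (i : ℕ) < m then deviationGain (c i) i x y (prefixProfile b s m) else 0
  calc deviationGain (prefixPotential c b) i x y s = ∑ m : Fin n, (G (m + 1) - G m) := by
        simp only [deviationGain, prefixPotential, ← sum_sub_distrib]
        exact sum_congr rfl fun m _ ↦ deviationGain_prefixPotential_step hc b i m s x y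
    _ = G n - G 0 := by
        rw [Fin.sum_univ_eq_sum_range (fun m ↦ G (m + 1) - G m), sum_range_sub]
    _ = deviationGain (c i) i x y s := by
        simp [G, prefixProfile_of_le]

theorem isPotentialGame_of_isAddSeparable_relPay (hk : 0 < k)
    (hc : ∀ i j : Fin n, i ≠ j → ∀ s, IsAddSeparable (relPay c i j s)) : IsPotentialGame c :=
  ⟨prefixPotential c ⟨0, hk⟩, fun i s x y ↦ (deviationGain_prefixPotential hc _ i s x y).symm⟩

end Potential

theorem stmt14 (n k : ℕ) (hk : 1 ≤ k)
    (c : Fin n → (Fin n → Fin k) → ℝ) :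
    IsPotentialGame c ↔
      ∀ i j : Fin n, i < j → ∀ (s : Fin n → Fin k) (x y : Fin k),
        relPay c i j s x y =
          (1 / (k : ℝ)) * (∑ y' : Fin k, relPay c i j s x y')
            + (1 / (k : ℝ)) * (∑ x' : Fin k, relPay c i j s x' y)
            - (1 / ((k : ℝ) ^ 2)) * (∑ x' : Fin k, ∑ y' : Fin k, relPay c i j s x' y') := by
  have : NeZero k := ⟨by omega⟩
  have hmean (i j : Fin n) (s : Fin n → Fin k) := isAddSeparable_iff_eq_mean (relPay c i j s)
  simp only [Fintype.card_fin, ← sq] at hmean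
  constructor
  · intro hc i j hij s
    exact (hmean i j s).mp (hc.isAddSeparable_relPay hij.ne s)
  · intro hc
    refine isPotentialGame_of_isAddSeparable_relPay hk fun i j hij s ↦ ?_
    rcases hij.lt_or_gt with hij | hji
    · exact (hmean i j s).mpr (hc i j hij s)
    · exact ((hmean j i s).mpr (hc j i hji s)).relPay_swap hji.ne
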